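/- arXiv:1804.06225 — 4 statements merged into one kernel-verified Lean document; each statement's English description precedes it below -/
import Mathlib

section
/- Let f : ℝ → ℝ be a nonnegative smooth function satisfying f - f'' ≥ (1/2) f on ℝ, with f and f'' integrable. Then (1 - ∂_x²)^{-1} f ≤ 2 f pointwise, where (1 - ∂_x²)^{-1} f = (1/2) e^{-|·|} * f. -/
open MeasureTheory Real
open scoped ContDiff

open Filter Set in
private lemma aux_tendsto_atTop (c A C : ℝ) :
    Tendsto (fun t : ℝ => Real.exp (c - t) * (A + C * |t|)) atTop (nhds 0) := by
  have h1 : Tendsto (fun t : ℝ => Real.exp c *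
      (A * Real.exp (-t) + C * (t * Real.exp (-t)))) atTop (nhds (Real.exp c * (A * 0 + C * 0))) :=
    Tendsto.const_mul _ ((Real.tendsto_exp_neg_atTop_nhds_zero.const_mul A).add
      (((by simpa using Real.tendsto_pow_mul_exp_neg_atTop_nhds_zero 1 :
        Tendsto (fun t : ℝ => t * Real.exp (-t)) atTop (nhds 0))).const_mul C))
  simp only [mul_zero, add_zero, zero_add] at h1
  apply h1.congr'
  filter_upwards [eventually_ge_atTop (0 : ℝ)] with t ht
  rw [abs_of_nonneg ht, show c - t = c + (-t) by ring, Real.exp_add]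
  ring

open Filter Set in
private lemma aux_tendsto_atBot (c A C : ℝ) :
    Tendsto (fun t : ℝ => Real.exp (t - c) * (A + C * |t|)) atBot (nhds 0) := by
  have := (aux_tendsto_atTop (-c) A C).comp tendsto_neg_atBot_atTop
  exact this.congr fun t => by
    simp only [Function.comp_apply, abs_neg, show -c - -t = t - c by ring]

/-- If `f ≥ 0` is smooth with `f - f'' ≥ (1/2) f` and `f`, `f''` integrable, then
`(1 - ∂ₓ²)⁻¹ f = (1/2) e^{-|·|} * f ≤ 2 f` pointwise. -/
theorem stmt8 (f : ℝ → ℝ) (hf : ContDiff ℝ (⊤ : ℕ∞) f) (hf_pos : ∀ x, 0 ≤ f x)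
    (hineq : ∀ x, (1/2) * f x ≤ f x - deriv (deriv f) x)
    (hf_int : Integrable f) (hf''_int : Integrable (fun x => deriv (deriv f) x)) :
    ∀ x : ℝ, (∫ t, (1/2) * Real.exp (-|x - t|) * f t) ≤ 2 * f x := by
  intro x
  have hfd : Differentiable ℝ f := hf.differentiable (by simp)
  have hf1 : ContDiff ℝ ∞ f := hf.of_le (by simp)
  have hfderiv : ContDiff ℝ ∞ (deriv f) := (contDiff_infty_iff_deriv.mp hf1).2
  have hfd' : Differentiable ℝ (deriv f) := hfderiv.differentiable (by simp)
  have hcontf : Continuous f := hf.continuous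
  have hcontD : Continuous (deriv f) := hfderiv.continuous
  have hcontD2 : Continuous (deriv (deriv f)) :=
    hfderiv.continuous_deriv (by exact_mod_cast le_top)
  -- bound on deriv f
  set C : ℝ := |deriv f 0| + ∫ s, |deriv (deriv f) s| with hCdef
  have hC : ∀ t, |deriv f t| ≤ C := by
    intro t
    have h1 : (∫ s in (0:ℝ)..t, deriv (deriv f) s) = deriv f t - deriv f 0 :=
      intervalIntegral.integral_deriv_eq_sub (fun s _ => hfd' s) hf''_int.intervalIntegrable
    have h2 : |∫ s in (0:ℝ)..t, deriv (deriv f) s| ≤ ∫ s, |deriv (deriv f) s| := by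
      rw [← Real.norm_eq_abs]
      refine le_trans (intervalIntegral.norm_integral_le_integral_norm_uIoc) ?_
      simp only [Real.norm_eq_abs]
      exact setIntegral_le_integral hf''_int.abs (ae_of_all _ fun s => abs_nonneg _)
    have := abs_sub_abs_le_abs_sub (deriv f t) (deriv f 0)
    rw [hCdef]
    have h3 : |deriv f t - deriv f 0| ≤ ∫ s, |deriv (deriv f) s| := by rw [← h1]; exact h2
    linarith [abs_sub_abs_le_abs_sub (deriv f t) (deriv f 0)]
  -- bound on f
  have hA : ∀ t, |f t| ≤ |f 0| + C * |t| := by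
    intro t
    have h1 : (∫ s in (0:ℝ)..t, deriv f s) = f t - f 0 :=
      intervalIntegral.integral_deriv_eq_sub (fun s _ => hfd s)
        (hcontD.intervalIntegrable _ _)
    have h2 : |∫ s in (0:ℝ)..t, deriv f s| ≤ C * |t - 0| := by
      rw [← Real.norm_eq_abs]
      exact intervalIntegral.norm_integral_le_of_norm_le_const fun s _ => hC s
    rw [h1, sub_zero] at h2
    have := abs_sub_abs_le_abs_sub (f t) (f 0)
    linarith
  set A : ℝ := |f 0| + C with hAdef
  set G : ℝ → ℝ := fun t => Real.exp (t - x) * (f t - deriv f t) with hGdef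
  set H : ℝ → ℝ := fun t => -Real.exp (x - t) * (f t + deriv f t) with hHdef
  set φ : ℝ → ℝ := fun t => Real.exp (-|x - t|) * (f t - deriv (deriv f) t) with hφdef
  have base_int : Integrable (fun t => f t - deriv (deriv f) t) := hf_int.sub hf''_int
  -- derivative computations
  have hG' : ∀ t, HasDerivAt G (Real.exp (t - x) * (f t - deriv (deriv f) t)) t := by
    intro t
    have h1 : HasDerivAt (fun t => Real.exp (t - x)) (Real.exp (t - x) * 1) t :=
      ((hasDerivAt_id t).sub_const x).exp
    have h2 : HasDerivAt (fun t => f t - deriv f t)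
        (deriv f t - deriv (deriv f) t) t :=
      ((hfd t).hasDerivAt).sub ((hfd' t).hasDerivAt)
    have := h1.mul h2
    exact this.congr_deriv (by ring)
  have hH' : ∀ t, HasDerivAt H (Real.exp (x - t) * (f t - deriv (deriv f) t)) t := by
    intro t
    have h1 : HasDerivAt (fun t : ℝ => -Real.exp (x - t))
        (-(Real.exp (x - t) * -1)) t := (((hasDerivAt_id t).const_sub x).exp).neg
    have h2 : HasDerivAt (fun t => f t + deriv f t)
        (deriv f t + deriv (deriv f) t) t :=
      ((hfd t).hasDerivAt).add ((hfd' t).hasDerivAt)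
    have := h1.mul h2
    exact this.congr_deriv (by ring)
  -- tendsto
  have hGbot : Filter.Tendsto G Filter.atBot (nhds 0) := by
    apply squeeze_zero_norm (a := fun t => Real.exp (t - x) * (A + C * |t|))
    · intro t
      rw [hGdef]
      simp only [Real.norm_eq_abs, abs_mul, Real.abs_exp]
      refine mul_le_mul_of_nonneg_left ?_ (Real.exp_pos _).le
      have h1 := hA t
      have h2 := hC t
      have := abs_sub (f t) (deriv f t)
      rw [hAdef]
      calc |f t - deriv f t| ≤ |f t| + |deriv f t| := abs_sub _ _
        _ ≤ (|f 0| + C * |t|) + C := add_le_add h1 h2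
        _ = |f 0| + C + C * |t| := by ring
    · exact aux_tendsto_atBot x A C
  have hHtop : Filter.Tendsto H Filter.atTop (nhds 0) := by
    apply squeeze_zero_norm (a := fun t => Real.exp (x - t) * (A + C * |t|))
    · intro t
      rw [hHdef]
      simp only [Real.norm_eq_abs, abs_mul, abs_neg, Real.abs_exp]
      refine mul_le_mul_of_nonneg_left ?_ (Real.exp_pos _).le
      calc |f t + deriv f t| ≤ |f t| + |deriv f t| := abs_add_le _ _
        _ ≤ (|f 0| + C * |t|) + C := add_le_add (hA t) (hC t)
        _ = A + C * |t| := by rw [hAdef]; ring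
    · exact aux_tendsto_atTop x A C
  -- integrability of the weighted integrands
  have hIic_int : IntegrableOn (fun t => Real.exp (t - x) * (f t - deriv (deriv f) t))
      (Set.Iic x) := by
    refine Integrable.mono' (base_int.abs.restrict)
      ((((Real.continuous_exp.comp (continuous_id.sub continuous_const)).mul
        (hcontf.sub hcontD2)).aestronglyMeasurable).restrict) ?_
    refine (ae_restrict_iff' measurableSet_Iic).2 (ae_of_all _ fun t ht => ?_)
    rw [Real.norm_eq_abs, abs_mul, Real.abs_exp]
    have h1 : Real.exp (t - x) ≤ 1 := Real.exp_le_one_iff.mpr (by simpa using ht)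
    nlinarith [abs_nonneg (f t - deriv (deriv f) t)]
  have hIoi_int : IntegrableOn (fun t => Real.exp (x - t) * (f t - deriv (deriv f) t))
      (Set.Ioi x) := by
    refine Integrable.mono' (base_int.abs.restrict)
      ((((Real.continuous_exp.comp (continuous_const.sub continuous_id)).mul
        (hcontf.sub hcontD2)).aestronglyMeasurable).restrict) ?_
    refine (ae_restrict_iff' measurableSet_Ioi).2 (ae_of_all _ fun t ht => ?_)
    rw [Real.norm_eq_abs, abs_mul, Real.abs_exp]
    have h1 : Real.exp (x - t) ≤ 1 := Real.exp_le_one_iff.mpr (by simp at ht ⊢; linarith)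
    nlinarith [abs_nonneg (f t - deriv (deriv f) t)]
  -- the two FTC identities
  have hI1 : (∫ t in Set.Iic x, Real.exp (t - x) * (f t - deriv (deriv f) t))
      = f x - deriv f x := by
    have := integral_Iic_of_hasDerivAt_of_tendsto' (fun t _ => hG' t) hIic_int hGbot
    rw [this, hGdef]
    simp
  have hI2 : (∫ t in Set.Ioi x, Real.exp (x - t) * (f t - deriv (deriv f) t))
      = f x + deriv f x := by
    have := integral_Ioi_of_hasDerivAt_of_tendsto' (fun t _ => hH' t) hIoi_int hHtop
    rw [this, hHdef]
    simp
  -- kernel integrand integrability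
  have hker_cont : Continuous fun t : ℝ => Real.exp (-|x - t|) :=
    Real.continuous_exp.comp ((continuous_const.sub continuous_id).abs.neg)
  have hφ_int : Integrable φ := by
    refine Integrable.mono' base_int.abs
      ((hker_cont.mul (hcontf.sub hcontD2)).aestronglyMeasurable) (ae_of_all _ fun t => ?_)
    rw [hφdef]
    simp only [Real.norm_eq_abs, abs_mul, Real.abs_exp]
    have h1 : Real.exp (-|x - t|) ≤ 1 := Real.exp_le_one_iff.mpr (neg_nonpos.mpr (abs_nonneg _))
    nlinarith [abs_nonneg (f t - deriv (deriv f) t)]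
  have hφ_eq : (∫ t, φ t) = 2 * f x := by
    have hsplit : (∫ t in Set.Iic x, φ t) + (∫ t in Set.Ioi x, φ t) = ∫ t, φ t := by
      refine intervalIntegral.integral_Iic_add_Ioi (hφ_int.integrableOn) (hφ_int.integrableOn)
    have e1 : (∫ t in Set.Iic x, φ t)
        = ∫ t in Set.Iic x, Real.exp (t - x) * (f t - deriv (deriv f) t) := by
      refine setIntegral_congr_fun measurableSet_Iic fun t ht => ?_
      rw [hφdef]
      simp only
      rw [abs_of_nonneg (by simpa using ht : (0:ℝ) ≤ x - t), neg_sub]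
    have e2 : (∫ t in Set.Ioi x, φ t)
        = ∫ t in Set.Ioi x, Real.exp (x - t) * (f t - deriv (deriv f) t) := by
      refine setIntegral_congr_fun measurableSet_Ioi fun t ht => ?_
      rw [hφdef]
      simp only
      have ht' : x < t := ht
      rw [abs_of_nonpos (by linarith : x - t ≤ 0), neg_neg]
    rw [← hsplit, e1, e2, hI1, hI2]
    ring
  -- final comparison
  have hk1 : Integrable (fun t => (1/2) * Real.exp (-|x - t|) * f t) := by
    refine Integrable.mono' hf_int
      (((continuous_const.mul hker_cont).mul hcontf).aestronglyMeasurable)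
      (ae_of_all _ fun t => ?_)
    rw [Real.norm_eq_abs, abs_mul, abs_mul, Real.abs_exp,
      abs_of_nonneg (hf_pos t)]
    have h1 : Real.exp (-|x - t|) ≤ 1 := Real.exp_le_one_iff.mpr (neg_nonpos.mpr (abs_nonneg _))
    have h2 := hf_pos t
    rw [abs_of_nonneg (by norm_num : (0:ℝ) ≤ 1/2)]
    nlinarith
  have hmono : (∫ t, (1/2) * Real.exp (-|x - t|) * f t) ≤ ∫ t, φ t := by
    refine integral_mono hk1 hφ_int fun t => ?_
    rw [hφdef]
    simp only
    have h1 : f t ≤ 2 * (f t - deriv (deriv f) t) := by linarith [hineq t]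
    have h2 : (0:ℝ) ≤ Real.exp (-|x - t|) := (Real.exp_pos _).le
    nlinarith
  rw [hφ_eq] at hmono
  exact hmono
end

section
/- The function Ψ'(x) = d/dx [(2/π) arctan(e^{x/6})] satisfies (1 - ∂_x²)Ψ' ≥ (1/2) Ψ' on ℝ, and consequently (1/2) e^{-|·|} * Ψ' ≤ 2 Ψ' pointwise. -/
/-!
Since `arctan (exp y)' = 1 / (2 cosh y)`, `Ψ'` is the secant profile `g x = c / cosh (a x)`
with `a = 1/6`. Its second derivative is `c a² (cosh² (a x) - 2) / cosh³ (a x)`, so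
`g - g'' = (1 - a²) g + 2 c a² / cosh³ (a x) ≥ (1 - a²) g`.
The convolution bound is proved directly rather than by inverting `1 - ∂ₓ²`:
`cosh (a x) ≤ cosh (a t) · exp (|a| |x - t|)` makes `g` log-Lipschitz, and integrating
`g t ≤ g x · exp (a |x - t|)` against `(1/2) exp (-|x - t|)` gives
`(1/2) e^{-|·|} * g ≤ g / (1 - a) = (6/5) g`.
-/

open MeasureTheory Real

theorem hasDerivAt_arctan_exp (y : ℝ) :
    HasDerivAt (fun y => arctan (exp y)) (2 * cosh y)⁻¹ y := by
  refine ((hasDerivAt_arctan' _).comp y (hasDerivAt_exp y)).congr_deriv ?_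
  rw [cosh_eq, exp_neg]
  field_simp
  ring

section InvCosh

variable {a c : ℝ}

theorem hasDerivAt_const_mul_inv_cosh (x : ℝ) :
    HasDerivAt (fun x => c * (cosh (a * x))⁻¹)
      (-(c * a) * sinh (a * x) / cosh (a * x) ^ 2) x := by
  have hcosh : HasDerivAt (fun x => cosh (a * x)) (sinh (a * x) * a) x := by
    simpa using ((hasDerivAt_id' x).const_mul a).cosh
  refine ((hcosh.inv (cosh_pos _).ne').const_mul c).congr_deriv ?_
  ring

theorem hasDerivAt_sinh_div_cosh_sq (x : ℝ) :
    HasDerivAt (fun x => -(c * a) * sinh (a * x) / cosh (a * x) ^ 2)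
      (c * a ^ 2 * (cosh (a * x) ^ 2 - 2) / cosh (a * x) ^ 3) x := by
  have hcosh_sq : HasDerivAt (fun x => cosh (a * x) ^ 2)
      (2 * cosh (a * x) * (sinh (a * x) * a)) x := by
    simpa using ((hasDerivAt_id' x).const_mul a).cosh.fun_pow 2
  have hsinh : HasDerivAt (fun x => sinh (a * x)) (cosh (a * x) * a) x := by
    simpa using ((hasDerivAt_id' x).const_mul a).sinh
  refine ((hsinh.const_mul (-(c * a))).div hcosh_sq
    (pow_ne_zero 2 (cosh_pos _).ne')).congr_deriv ?_
  have hc := (cosh_pos (a * x)).ne'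
  field_simp
  rw [sinh_sq]
  ring

theorem deriv_deriv_const_mul_inv_cosh :
    deriv (deriv fun x => c * (cosh (a * x))⁻¹) =
      fun x => c * a ^ 2 * (cosh (a * x) ^ 2 - 2) / cosh (a * x) ^ 3 := by
  have h : deriv (fun x => c * (cosh (a * x))⁻¹) =
      fun x => -(c * a) * sinh (a * x) / cosh (a * x) ^ 2 :=
    funext fun x => (hasDerivAt_const_mul_inv_cosh x).deriv
  rw [h]
  exact funext fun x => (hasDerivAt_sinh_div_cosh_sq x).deriv

theorem mul_le_sub_deriv_deriv_const_mul_inv_cosh (hc : 0 ≤ c) (x : ℝ) :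
    (1 - a ^ 2) * (c * (cosh (a * x))⁻¹) ≤
      c * (cosh (a * x))⁻¹ - deriv (deriv fun x => c * (cosh (a * x))⁻¹) x := by
  have hpos := cosh_pos (a * x)
  have h : c * (cosh (a * x))⁻¹ - deriv (deriv fun x => c * (cosh (a * x))⁻¹) x =
      (1 - a ^ 2) * (c * (cosh (a * x))⁻¹) + 2 * c * a ^ 2 / cosh (a * x) ^ 3 := by
    rw [deriv_deriv_const_mul_inv_cosh]
    field_simp
    ring
  rw [h, le_add_iff_nonneg_right]
  positivity

end InvCosh

theorem cosh_le_cosh_mul_exp_abs_sub (u v : ℝ) : cosh u ≤ cosh v * exp |u - v| := by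
  have hu : exp u ≤ exp v * exp |u - v| := by
    rw [← exp_add, exp_le_exp]; linarith [le_abs_self (u - v)]
  have hnu : exp (-u) ≤ exp (-v) * exp |u - v| := by
    rw [← exp_add, exp_le_exp]; linarith [neg_abs_le (u - v)]
  rw [cosh_eq, cosh_eq]
  linarith

theorem inv_cosh_mul_le (a x t : ℝ) :
    (cosh (a * t))⁻¹ ≤ (cosh (a * x))⁻¹ * exp (|a| * |x - t|) := by
  have h := cosh_le_cosh_mul_exp_abs_sub (a * x) (a * t)
  rw [← mul_sub, abs_mul] at h
  rw [inv_mul_eq_div, inv_le_comm₀ (cosh_pos _) (by positivity), inv_div,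
    div_le_iff₀ (exp_pos _)]
  exact h

theorem integral_exp_neg_mul_abs {b : ℝ} (hb : 0 < b) : ∫ s, exp (-(b * |s|)) = 2 / b := by
  rw [integral_comp_abs (f := fun s => exp (-(b * s)))]
  simp_rw [← neg_mul]
  rw [integral_exp_mul_Ioi (neg_lt_zero.mpr hb)]
  field_simp
  simp

theorem integral_half_exp_neg_abs_mul_le {f : ℝ → ℝ} {x b : ℝ} (hb : b < 1)
    (hf₀ : ∀ t, 0 ≤ f t) (hf : ∀ t, f t ≤ f x * exp (b * |x - t|)) :
    ∫ t, (1/2) * exp (-|x - t|) * f t ≤ f x / (1 - b) := by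
  have hb' : 0 < 1 - b := by linarith
  have hbound : ∀ t, (1/2) * exp (-|x - t|) * f t ≤
      (1/2) * f x * exp (-((1 - b) * |t - x|)) := fun t => by
    calc (1/2) * exp (-|x - t|) * f t
        ≤ (1/2) * exp (-|x - t|) * (f x * exp (b * |x - t|)) := by gcongr; exact hf t
      _ = (1/2) * f x * exp (-((1 - b) * |t - x|)) := by
        rw [abs_sub_comm t x, show -((1 - b) * |x - t|) = -|x - t| + b * |x - t| by ring,
          exp_add]
        ring
  have hint : ∫ t, exp (-((1 - b) * |t - x|)) = 2 / (1 - b) := by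
    rw [integral_sub_right_eq_self (fun s => exp (-((1 - b) * |s|))) x,
      integral_exp_neg_mul_abs hb']
  have hintegrable : Integrable fun t => (1/2) * f x * exp (-((1 - b) * |t - x|)) := by
    refine (Integrable.of_integral_ne_zero ?_).const_mul _
    rw [hint]; positivity
  calc ∫ t, (1/2) * exp (-|x - t|) * f t
      ≤ ∫ t, (1/2) * f x * exp (-((1 - b) * |t - x|)) :=
        integral_mono_of_nonneg (ae_of_all _ fun t => by have := hf₀ t; positivity)
          hintegrable (ae_of_all _ hbound)
    _ = f x / (1 - b) := by
        rw [integral_const_mul, hint]; field_simp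

theorem deriv_two_div_pi_mul_arctan_exp_div_six :
    deriv (fun x : ℝ => (2/π) * arctan (exp (x/6))) =
      fun x => (6 * π)⁻¹ * (cosh (6⁻¹ * x))⁻¹ := by
  funext x
  have h := ((hasDerivAt_arctan_exp (x/6)).comp x ((hasDerivAt_id' x).div_const 6)).const_mul (2/π)
  refine h.deriv.trans ?_
  rw [div_eq_inv_mul x]
  field_simp

/-- The function `Ψ'`, where `Ψ(x) = (2/π) arctan(e^{x/6})`, satisfies
`(1 - ∂ₓ²)Ψ' ≥ (1/2)Ψ'` on `ℝ`, and consequently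
`(1/2) e^{-|·|} * Ψ' ≤ 2 Ψ'` pointwise. -/
theorem stmt9 :
    let Ψ : ℝ → ℝ := fun x => (2/π) * Real.arctan (Real.exp (x/6))
    let Ψ' : ℝ → ℝ := deriv Ψ
    (∀ x : ℝ, (1/2) * Ψ' x ≤ Ψ' x - deriv (deriv Ψ') x) ∧
    (∀ x : ℝ, (∫ t, (1/2) * Real.exp (-|x - t|) * Ψ' t) ≤ 2 * Ψ' x) := by
  intro Ψ Ψ'
  have hΨ' : Ψ' = fun x => (6 * π)⁻¹ * (cosh (6⁻¹ * x))⁻¹ :=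
    deriv_two_div_pi_mul_arctan_exp_div_six
  have hc : 0 ≤ (6 * π)⁻¹ := by positivity
  have hΨ'_pos : ∀ x, 0 ≤ Ψ' x := fun x => by rw [hΨ']; have := cosh_pos (6⁻¹ * x); positivity
  refine ⟨fun x => ?_, fun x => ?_⟩
  · calc (1/2) * Ψ' x ≤ (1 - 6⁻¹ ^ 2) * Ψ' x :=
          mul_le_mul_of_nonneg_right (by norm_num) (hΨ'_pos x)
      _ ≤ Ψ' x - deriv (deriv Ψ') x := by
        rw [hΨ']; exact mul_le_sub_deriv_deriv_const_mul_inv_cosh hc x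
  · have hlip : ∀ t, Ψ' t ≤ Ψ' x * exp (6⁻¹ * |x - t|) := fun t => by
      rw [hΨ', mul_assoc]
      simpa [abs_of_pos] using mul_le_mul_of_nonneg_left (inv_cosh_mul_le 6⁻¹ x t) hc
    calc ∫ t, (1/2) * exp (-|x - t|) * Ψ' t ≤ Ψ' x / (1 - 6⁻¹) :=
          integral_half_exp_neg_abs_mul_le (by norm_num) hΨ'_pos hlip
      _ ≤ 2 * Ψ' x := by have := hΨ'_pos x; rw [div_le_iff₀ (by norm_num)]; nlinarith
end

section
/- Let c ∈ ℝ, c ≠ 0, and u(t,x) = c e^{-|x - ct|}. Then u is a global weak solution of the Camassa–Holm equation in the form u_t + u u_x + ∂_x (1 - ∂_x²)^{-1}(u² + u_x²/2) = 0, where the equation holds in the sense of distributions on ℝ². -/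
open MeasureTheory Real Set Filter

lemma expIoi (a : ℝ) {b : ℝ} (hb : 0 < b) :
    ∫ s in Set.Ioi a, Real.exp (-(b*s)) = Real.exp (-(b*a)) / b := by
  have h := integral_comp_mul_left_Ioi (fun x => Real.exp (-x)) a hb
  simp only [smul_eq_mul] at h
  rw [h, integral_exp_neg_Ioi]
  ring

lemma expIic (a : ℝ) {b : ℝ} (hb : 0 < b) :
    ∫ s in Set.Iic a, Real.exp (b*s) = Real.exp (b*a) / b := by
  have h := integral_comp_neg_Ioi (-a) (fun s => Real.exp (b*s))
  simp only [neg_neg] at h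
  rw [← h]
  have h2 := expIoi (-a) hb
  simp only [mul_neg, neg_neg] at h2 ⊢
  simpa using h2

lemma integrable_exp_neg_abs' : Integrable (fun s : ℝ => Real.exp (-|s|)) := by
  have h1 : IntegrableOn (fun s : ℝ => Real.exp (-|s|)) (Set.Iic 0) := by
    apply (integrableOn_exp_Iic 0).congr_fun ?_ measurableSet_Iic
    intro s hs
    simp only [Set.mem_Iic] at hs
    simp [abs_of_nonpos hs]
  have h2 : IntegrableOn (fun s : ℝ => Real.exp (-|s|)) (Set.Ioi 0) := by
    have hg : IntegrableOn (fun s : ℝ => Real.exp (-s)) (Set.Ioi 0) := by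
      have := Real.GammaIntegral_convergent one_pos
      simpa using this
    apply hg.congr_fun ?_ measurableSet_Ioi
    intro s hs
    simp only [Set.mem_Ioi] at hs
    simp [abs_of_pos hs]
  rw [← integrableOn_univ, ← Set.Iic_union_Ioi (a := (0:ℝ))]
  exact h1.union h2

lemma J_integrable (d : ℝ) : Integrable (fun s : ℝ => Real.exp (-(|d - s| + 2*|s|))) := by
  apply integrable_exp_neg_abs'.mono'
  · exact (Continuous.rexp (by continuity)).aestronglyMeasurable
  · refine Filter.Eventually.of_forall fun s => ?_
    rw [Real.norm_eq_abs, abs_of_pos (Real.exp_pos _), Real.exp_le_exp]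
    have := abs_nonneg (d - s); have := abs_nonneg s
    linarith

lemma J_nonneg {d : ℝ} (hd : 0 ≤ d) :
    ∫ s : ℝ, Real.exp (-(|d - s| + 2*|s|))
      = 4/3 * Real.exp (-d) - 2/3 * Real.exp (-(2*d)) := by
  set f : ℝ → ℝ := fun s => Real.exp (-(|d - s| + 2*|s|)) with hf
  have hint : Integrable f := J_integrable d
  have split1 : (∫ s : ℝ, f s) = (∫ s in Set.Iic d, f s) + ∫ s in Set.Ioi d, f s :=
    (intervalIntegral.integral_Iic_add_Ioi hint.integrableOn hint.integrableOn).symm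
  have split2 : (∫ s in Set.Iic d, f s) - ∫ s in Set.Iic 0, f s = ∫ s in (0:ℝ)..d, f s :=
    intervalIntegral.integral_Iic_sub_Iic hint.integrableOn hint.integrableOn
  have hA : (∫ s in Set.Iic 0, f s) = Real.exp (-d) / 3 := by
    have : (∫ s in Set.Iic 0, f s) = ∫ s in Set.Iic 0, Real.exp (-d) * Real.exp (3*s) := by
      apply setIntegral_congr_fun measurableSet_Iic
      intro s hs
      simp only [Set.mem_Iic] at hs
      show Real.exp (-(|d - s| + 2*|s|)) = _
      rw [abs_of_nonneg (by linarith : (0:ℝ) ≤ d - s), abs_of_nonpos hs]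
      show _ = Real.exp (-d) * Real.exp (3*s)
      rw [← Real.exp_add]
      ring_nf
    rw [this, integral_const_mul, expIic 0 (by norm_num : (0:ℝ) < 3)]
    simp
    ring
  have hB : (∫ s in (0:ℝ)..d, f s) = Real.exp (-d) * (1 - Real.exp (-d)) := by
    have : (∫ s in (0:ℝ)..d, f s) = ∫ s in (0:ℝ)..d, Real.exp (-d) * Real.exp (-s) := by
      apply intervalIntegral.integral_congr
      intro s hs
      rw [Set.uIcc_of_le hd] at hs
      obtain ⟨h1, h2⟩ := hs
      rw [hf]
      simp only
      rw [abs_of_nonneg (by linarith : (0:ℝ) ≤ d - s), abs_of_nonneg h1, ← Real.exp_add]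
      ring_nf
    rw [this, intervalIntegral.integral_const_mul]
    have : (∫ s in (0:ℝ)..d, Real.exp (-s)) = 1 - Real.exp (-d) := by
      have := intervalIntegral.integral_comp_neg (a := (0:ℝ)) (b := d) (fun x => Real.exp x)
      rw [this, integral_exp]
      simp
    rw [this]
  have hC : (∫ s in Set.Ioi d, f s) = Real.exp (-(2*d)) / 3 := by
    have : (∫ s in Set.Ioi d, f s) = ∫ s in Set.Ioi d, Real.exp d * Real.exp (-(3*s)) := by
      apply setIntegral_congr_fun measurableSet_Ioi
      intro s hs
      simp only [Set.mem_Ioi] at hs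
      show Real.exp (-(|d - s| + 2*|s|)) = _
      rw [abs_of_nonpos (by linarith : d - s ≤ 0), abs_of_nonneg (by linarith : (0:ℝ) ≤ s)]
      show _ = Real.exp d * Real.exp (-(3*s))
      rw [← Real.exp_add]
      ring_nf
    rw [this, integral_const_mul, expIoi d (by norm_num : (0:ℝ) < 3),
      show Real.exp d * (Real.exp (-(3*d))/3) = Real.exp d * Real.exp (-(3*d)) / 3 from by ring,
      ← Real.exp_add, show d + -(3*d) = -(2*d) by ring]
  have h2 : Real.exp (-(2*d)) = Real.exp (-d) * Real.exp (-d) := by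
    rw [← Real.exp_add]; ring_nf
  have hIicd : (∫ s in Set.Iic d, f s)
      = Real.exp (-d) * (1 - Real.exp (-d)) + Real.exp (-d)/3 := by
    rw [hA, hB] at split2; linarith
  rw [split1, hIicd, hC, h2]; ring

lemma J_eq (d : ℝ) :
    ∫ s : ℝ, Real.exp (-(|d - s| + 2*|s|))
      = 4/3 * Real.exp (-|d|) - 2/3 * Real.exp (-(2*|d|)) := by
  rcases le_or_gt 0 d with hd | hd
  · rw [abs_of_nonneg hd]; exact J_nonneg hd
  · rw [abs_of_neg hd]
    rw [← MeasureTheory.integral_neg_eq_self (fun s => Real.exp (-(|d - s| + 2*|s|)))]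
    have : (fun s : ℝ => Real.exp (-(|d - -s| + 2*|-s|)))
        = fun s : ℝ => Real.exp (-(|(-d) - s| + 2*|s|)) := by
      funext s
      rw [abs_neg, show d - -s = -((-d) - s) by ring, abs_neg]
    rw [this]
    exact J_nonneg (by linarith)

lemma h_eq (c t x : ℝ) :
    (∫ s : ℝ, (1/2) * Real.exp (-|x - s|) *
        ((c * Real.exp (-|s - c*t|))^2
          + (-c * Real.sign (s - c*t) * Real.exp (-|s - c*t|))^2/2))
      = c^2 * Real.exp (-|x - c*t|) - c^2/2 * Real.exp (-(2*|x - c*t|)) := by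
  have hcongr : (fun s : ℝ => (1/2) * Real.exp (-|x - s|) *
        ((c * Real.exp (-|s - c*t|))^2
          + (-c * Real.sign (s - c*t) * Real.exp (-|s - c*t|))^2/2))
      =ᵐ[volume] fun s : ℝ => (3*c^2/4) * Real.exp (-(|x - s| + 2*|s - c*t|)) := by
    filter_upwards [MeasureTheory.compl_mem_ae_iff.mpr (measure_singleton (c*t))] with s hs
    have hne : s - c*t ≠ 0 := sub_ne_zero.mpr (by simpa using hs)
    have hsign : Real.sign (s - c*t) ^ 2 = 1 := by
      rcases lt_or_gt_of_ne hne with h | h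
      · rw [Real.sign_of_neg h]; norm_num
      · rw [Real.sign_of_pos h]; norm_num
    have hexp2 : Real.exp (-|s - c*t|) ^ 2 = Real.exp (-(2*|s - c*t|)) := by
      rw [sq, ← Real.exp_add]; ring_nf
    have hprod : Real.exp (-|x - s|) * Real.exp (-(2*|s - c*t|))
        = Real.exp (-(|x - s| + 2*|s - c*t|)) := by
      rw [← Real.exp_add]; ring_nf
    rw [mul_pow, mul_pow, mul_pow, hsign, hexp2]
    rw [← hprod]
    ring
  rw [MeasureTheory.integral_congr_ae hcongr, MeasureTheory.integral_const_mul]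
  have htrans : (∫ s : ℝ, Real.exp (-(|x - s| + 2*|s - c*t|)))
      = ∫ s : ℝ, Real.exp (-(|(x - c*t) - s| + 2*|s|)) := by
    rw [← MeasureTheory.integral_add_right_eq_self
      (fun s : ℝ => Real.exp (-(|x - s| + 2*|s - c*t|))) (c*t)]
    congr 1
    funext s
    rw [show x - (s + c*t) = (x - c*t) - s by ring, show s + c*t - c*t = s by ring]
  rw [htrans, J_eq]
  have h2 : Real.exp (-(2*|x - c*t|)) = Real.exp (-|x - c*t|) * Real.exp (-|x - c*t|) := by
    rw [← Real.exp_add]; ring_nf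
  rw [h2]; ring

/-- The peakon `u(t,x) = c e^{-|x-ct|}` (`c ≠ 0`) is a global weak solution of
the Camassa–Holm equation `u_t + uu_x + ∂ₓ(1-∂ₓ²)⁻¹(u² + u_x²/2) = 0` in the
sense of distributions on `ℝ²`: tested against any smooth compactly supported
`φ(t,x)` one has `∫∫ (u φ_t + (u²/2 + h) φ_x) = 0`, where
`h = (1-∂ₓ²)⁻¹(u² + u_x²/2)` is given by convolution with `(1/2)e^{-|·|}`. -/
theorem stmt16 (c : ℝ) (hc : c ≠ 0) :
    let u : ℝ → ℝ → ℝ := fun t x => c * Real.exp (-|x - c*t|)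
    let ux : ℝ → ℝ → ℝ := fun t x => -c * Real.sign (x - c*t) * Real.exp (-|x - c*t|)
    let h : ℝ → ℝ → ℝ := fun t x =>
      ∫ s : ℝ, (1/2) * Real.exp (-|x - s|) * ((u t s)^2 + (ux t s)^2/2)
    ∀ φ : ℝ → ℝ → ℝ,
      ContDiff ℝ (⊤ : ℕ∞) (Function.uncurry φ) →
      HasCompactSupport (Function.uncurry φ) →
      (∫ t : ℝ, ∫ x : ℝ,
          (u t x * deriv (fun τ => φ τ x) t
            + ((u t x)^2/2 + h t x) * deriv (fun ξ => φ t ξ) x)) = 0 := by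
  intro u ux h φ hφ hφc
  set Φ := Function.uncurry φ with hΦdef
  have hΦd : Differentiable ℝ Φ := hφ.differentiable (by simp)
  -- partial derivatives
  have hderiv_t : ∀ t x : ℝ, HasDerivAt (fun τ => φ τ x) (fderiv ℝ Φ (t, x) (1, 0)) t := by
    intro t x
    have h1 : HasDerivAt (fun τ : ℝ => (τ, x)) (((1:ℝ), (0:ℝ))) t :=
      (hasDerivAt_id t).prodMk (hasDerivAt_const t x)
    exact ((hΦd (t, x)).hasFDerivAt.comp_hasDerivAt t h1)
  have hderiv_x : ∀ t x : ℝ, HasDerivAt (fun ξ => φ t ξ) (fderiv ℝ Φ (t, x) (0, 1)) x := by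
    intro t x
    have h1 : HasDerivAt (fun ξ : ℝ => (t, ξ)) (((0:ℝ), (1:ℝ))) x :=
      (hasDerivAt_const x t).prodMk (hasDerivAt_id x)
    exact ((hΦd (t, x)).hasFDerivAt.comp_hasDerivAt x h1)
  have hlin : ∀ p : ℝ × ℝ, fderiv ℝ Φ p (1, c)
      = fderiv ℝ Φ p (1, 0) + c * fderiv ℝ Φ p (0, 1) := by
    intro p
    have hv : ((1:ℝ), c) = ((1:ℝ), (0:ℝ)) + c • ((0:ℝ), (1:ℝ)) := by
      simp [Prod.ext_iff]
    rw [hv, map_add, (fderiv ℝ Φ p).map_smul, smul_eq_mul]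
  -- the nonlocal term collapses: u²/2 + h = c u
  have hhq : ∀ t x : ℝ, (u t x)^2/2 + h t x = c * u t x := by
    intro t x
    have h1 : h t x = c^2 * Real.exp (-|x - c*t|) - c^2/2 * Real.exp (-(2*|x - c*t|)) :=
      h_eq c t x
    have h2 : Real.exp (-(2*|x - c*t|)) = Real.exp (-|x - c*t|) * Real.exp (-|x - c*t|) := by
      rw [← Real.exp_add]; ring_nf
    show (c * Real.exp (-|x - c*t|))^2/2 + h t x = c * (c * Real.exp (-|x - c*t|))
    rw [h1, h2]; ring
  -- the inner integrand
  have hptwise : ∀ t x : ℝ,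
      u t x * deriv (fun τ => φ τ x) t + ((u t x)^2/2 + h t x) * deriv (fun ξ => φ t ξ) x
        = u t x * (fderiv ℝ Φ (t, x) (1, c)) := by
    intro t x
    rw [(hderiv_t t x).deriv, (hderiv_x t x).deriv, hhq t x, hlin (t, x)]
    ring
  have hinner : ∀ t : ℝ,
      (∫ x : ℝ, (u t x * deriv (fun τ => φ τ x) t
          + ((u t x)^2/2 + h t x) * deriv (fun ξ => φ t ξ) x))
        = ∫ y : ℝ, c * Real.exp (-|y|) * (fderiv ℝ Φ (t, y + c*t) (1, c)) := by
    intro t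
    rw [show (fun x : ℝ => u t x * deriv (fun τ => φ τ x) t
          + ((u t x)^2/2 + h t x) * deriv (fun ξ => φ t ξ) x)
        = fun x : ℝ => u t x * (fderiv ℝ Φ (t, x) (1, c)) from funext fun x => hptwise t x]
    rw [← MeasureTheory.integral_add_right_eq_self
      (fun x : ℝ => u t x * (fderiv ℝ Φ (t, x) (1, c))) (c*t)]
    congr 1
    funext y
    show c * Real.exp (-|y + c*t - c*t|) * _ = _
    rw [show y + c*t - c*t = y by ring]
  -- rewrite the double integral
  rw [show (fun t : ℝ => (∫ x : ℝ, (u t x * deriv (fun τ => φ τ x) t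
        + ((u t x)^2/2 + h t x) * deriv (fun ξ => φ t ξ) x)))
      = fun t : ℝ => ∫ y : ℝ, c * Real.exp (-|y|) * (fderiv ℝ Φ (t, y + c*t) (1, c))
    from funext hinner]
  -- Fubini
  let E : Homeomorph (ℝ × ℝ) (ℝ × ℝ) :=
    { toFun := fun p => (p.1, p.2 + c * p.1)
      invFun := fun p => (p.1, p.2 - c * p.1)
      left_inv := fun p => by simp
      right_inv := fun p => by simp
      continuous_toFun := by fun_prop
      continuous_invFun := by fun_prop }
  have hcont_fderiv : Continuous fun p : ℝ × ℝ => fderiv ℝ Φ p :=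
    (hφ.fderiv_right (m := (⊤ : ℕ∞)) (by simp)).continuous
  have hcontF : Continuous (Function.uncurry
      (fun t y : ℝ => c * Real.exp (-|y|) * (fderiv ℝ Φ (t, y + c*t) (1, c)))) := by
    apply Continuous.mul
    · fun_prop
    · exact (hcont_fderiv.comp E.continuous).clm_apply continuous_const
  have hsuppF : HasCompactSupport (Function.uncurry
      (fun t y : ℝ => c * Real.exp (-|y|) * (fderiv ℝ Φ (t, y + c*t) (1, c)))) := by
    have h1 : HasCompactSupport fun p : ℝ × ℝ => fderiv ℝ Φ p ((1:ℝ), c) :=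
      hφc.fderiv_apply ℝ ((1:ℝ), c)
    have h2 : HasCompactSupport ((fun p : ℝ × ℝ => fderiv ℝ Φ p ((1:ℝ), c)) ∘ E) :=
      h1.comp_homeomorph E
    exact h2.mul_left
  have hFint : Integrable (Function.uncurry
      (fun t y : ℝ => c * Real.exp (-|y|) * (fderiv ℝ Φ (t, y + c*t) (1, c))))
      (volume.prod volume) := by
    exact hcontF.integrable_of_hasCompactSupport hsuppF
  rw [MeasureTheory.integral_integral_swap hFint]
  -- inner time integral vanishes
  have hzero : ∀ y : ℝ, (∫ t : ℝ, fderiv ℝ Φ (t, y + c*t) ((1:ℝ), c)) = 0 := by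
    intro y
    set ψ : ℝ → ℝ := fun τ => φ τ (y + c * τ) with hψdef
    have hψderiv : ∀ t : ℝ, HasDerivAt ψ (fderiv ℝ Φ (t, y + c*t) ((1:ℝ), c)) t := by
      intro t
      have h1 : HasDerivAt (fun τ : ℝ => (τ, y + c * τ)) (((1:ℝ), c)) t :=
        (hasDerivAt_id t).prodMk (by simpa using ((hasDerivAt_id t).const_mul c).const_add y)
      exact ((hΦd (t, y + c*t)).hasFDerivAt.comp_hasDerivAt t h1)
    have hψ1 : ContDiff ℝ 1 ψ := by
      have hcurve : ContDiff ℝ (⊤ : ℕ∞) fun τ : ℝ => (τ, y + c * τ) :=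
        contDiff_id.prodMk (contDiff_const.add (contDiff_const.mul contDiff_id))
      exact (hφ.comp hcurve).of_le (by simp)
    have hψc : HasCompactSupport ψ := by
      apply HasCompactSupport.intro (hφc.image continuous_fst)
      intro τ hτ
      by_contra hne
      exact hτ ⟨(τ, y + c * τ), subset_tsupport Φ hne, rfl⟩
    have hψderiv' : (fun t : ℝ => fderiv ℝ Φ (t, y + c*t) ((1:ℝ), c)) = deriv ψ :=
      funext fun t => ((hψderiv t).deriv).symm
    rw [hψderiv']
    have hdc : Continuous (deriv ψ) := hψ1.continuous_deriv le_rfl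
    have hdint : Integrable (deriv ψ) := hdc.integrable_of_hasCompactSupport hψc.deriv
    rw [← intervalIntegral.integral_Iic_add_Ioi (b := (0:ℝ))
      hdint.integrableOn hdint.integrableOn,
      HasCompactSupport.integral_Iic_deriv_eq hψ1 hψc 0,
      HasCompactSupport.integral_Ioi_deriv_eq hψ1 hψc 0]
    ring
  have : (fun y : ℝ => ∫ t : ℝ, c * Real.exp (-|y|) * (fderiv ℝ Φ (t, y + c*t) (1, c)))
      = fun y : ℝ => 0 := by
    funext y
    rw [MeasureTheory.integral_const_mul, hzero y, mul_zero]
  rw [this, integral_zero]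
end

section
/- Let u : [0,T] × ℝ → ℝ be continuous in t, Lipschitz in x uniformly in t, with |u_x(t,x)| ≤ L for all (t,x), and let q(t,x) be the flow defined by ∂_t q(t,x) = u(t, q(t,x)), q(0,x) = x. Then q(t,·) is differentiable in x with q_x(t,x) = exp(∫_0^t u_x(s, q(s,x)) ds), and in particular e^{-Lt} ≤ q_x(t,x) ≤ e^{Lt} for all t ∈ [0,T] and x ∈ ℝ; moreover, if additionally y(t,·) := u(t,·) - u_xx(t,·) is C¹ and u solves the Camassa–Holm equation (so y_t + u y_x + 2 u_x y = 0), then y(0,x) = y(t, q(t,x)) q_x(t,x)² for all t and x. -/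
open MeasureTheory Real intervalIntegral

/-!
The difference `δ s = q s x' - q s x` of two trajectories solves the scalar linear ODE
`δ' = a δ` with `a s = dslope (u s) (q s x) (q s x')`, a divided difference bounded by `L`
that reduces to `u_x (s, q s x)` on the diagonal `x' = x`. Along a trajectory,
`k s = y s (q s x)` solves the same kind of ODE with `a s = -2 u_x (s, q s x)`, by the chain
rule and the transport equation. A scalar linear ODE with bounded integrable coefficient is
solved by `k t = k 0 * exp (∫₀ᵗ a)`: if `k` vanishes somewhere, Grönwall uniqueness makes it
vanish identically, and otherwise `log |k|` is a primitive of `a`. Dividing `δ t` by `x' - x`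
and letting `x' → x` under the integral (dominated convergence) gives `q_x`.
-/

open Set Filter Topology Function

theorem mul_pos_of_continuousOn_of_ne_zero {f : ℝ → ℝ} {a b : ℝ}
    (hf : ContinuousOn f (uIcc a b))
    (hne : ∀ s ∈ uIcc a b, f s ≠ 0) : 0 < f a * f b := by
  by_contra! h
  have h0 : (0 : ℝ) ∈ uIcc (f a) (f b) := by
    rcases (hne a left_mem_uIcc).lt_or_gt with ha | ha
    · exact mem_uIcc.2 (Or.inl ⟨ha.le, nonneg_of_mul_nonpos_right h ha⟩)
    · exact mem_uIcc.2 (Or.inr ⟨nonpos_of_mul_nonpos_right h ha, ha.le⟩)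
  obtain ⟨s, hs, hfs⟩ := intermediate_value_uIcc hf h0
  exact hne s hs hfs

section LinearODE

variable {k a : ℝ → ℝ} {K t : ℝ}

theorem eq_zero_of_hasDerivAt_mul_self (hk : ∀ s, HasDerivAt k (a s * k s) s)
    (ha : ∀ s, |a s| ≤ K) {σ : ℝ} (hσ : k σ = 0) : k = 0 := by
  have hlip (s : ℝ) : LipschitzOnWith K.toNNReal (fun w => a s * w) univ := by
    refine (LipschitzWith.of_dist_le_mul fun w w' => ?_).lipschitzOnWith
    rw [dist_eq, dist_eq, ← mul_sub, abs_mul, coe_toNNReal _ ((abs_nonneg _).trans (ha s))]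
    exact mul_le_mul_of_nonneg_right (ha s) (abs_nonneg _)
  exact ODE_solution_unique_univ (s := fun _ => univ) hlip (fun s => ⟨hk s, trivial⟩)
    (fun s => ⟨by simp, trivial⟩) hσ

theorem eq_mul_exp_integral_of_ne_zero (ht : 0 ≤ t)
    (hk : ∀ s ∈ Icc 0 t, HasDerivAt k (a s * k s) s)
    (hne : ∀ s ∈ Icc 0 t, k s ≠ 0) (ha : IntervalIntegrable a volume 0 t) :
    k t = k 0 * exp (∫ s in 0..t, a s) := by
  rw [← uIcc_of_le ht] at hk hne
  have hlog : ∫ s in 0..t, a s = log (k t) - log (k 0) := by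
    refine integral_eq_sub_of_hasDerivAt (f := fun s => log (k s)) (fun s hs => ?_) ha
    simpa only [mul_div_cancel_right₀ _ (hne s hs)] using (hk s hs).log (hne s hs)
  have hk0 := hne 0 left_mem_uIcc
  have habs : |k t| = |k 0| * exp (∫ s in 0..t, a s) := by
    rw [hlog, exp_sub, exp_log_eq_abs (hne t right_mem_uIcc), exp_log_eq_abs hk0,
      mul_div_cancel₀ _ (abs_ne_zero.2 hk0)]
  have hsign : 0 < k 0 * k t :=
    mul_pos_of_continuousOn_of_ne_zero (fun s hs => (hk s hs).continuousAt.continuousWithinAt) hne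
  apply mul_right_cancel₀ hk0
  calc k t * k 0 = |k 0 * k t| := by rw [abs_of_pos hsign, mul_comm]
    _ = k 0 * exp (∫ s in 0..t, a s) * k 0 := by
      rw [abs_mul, habs, ← mul_assoc, ← abs_mul, abs_mul_self]; ring

theorem eq_mul_exp_integral_of_hasDerivAt (ht : 0 ≤ t) (hk : ∀ s, HasDerivAt k (a s * k s) s)
    (ha : ∀ s, |a s| ≤ K) (ha_int : IntervalIntegrable a volume 0 t) :
    k t = k 0 * exp (∫ s in 0..t, a s) := by
  by_cases hzero : ∃ σ ∈ Icc 0 t, k σ = 0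
  · obtain ⟨σ, -, hσ⟩ := hzero
    simp [eq_zero_of_hasDerivAt_mul_self hk ha hσ]
  · push Not at hzero
    exact eq_mul_exp_integral_of_ne_zero ht (fun s _ => hk s) hzero ha_int

end LinearODE

theorem intervalIntegrable_of_abs_le {f : ℝ → ℝ} {K : ℝ} (hf : Measurable f)
    (h : ∀ s, |f s| ≤ K) (a b : ℝ) : IntervalIntegrable f volume a b :=
  intervalIntegrable_const.mono_fun' hf.aestronglyMeasurable (ae_of_all _ h)

theorem abs_integral_le_mul {f : ℝ → ℝ} {K t : ℝ} (ht : 0 ≤ t) (h : ∀ s, |f s| ≤ K) :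
    |∫ s in 0..t, f s| ≤ K * t := by
  simpa [abs_of_nonneg ht] using norm_integral_le_of_norm_le_const (a := 0) (b := t) (f := f)
    fun s _ => by rw [norm_eq_abs]; exact h s

theorem abs_dslope_le {f : ℝ → ℝ} {L : ℝ} (hf : Differentiable ℝ f)
    (hL : ∀ x, |deriv f x| ≤ L) (a b : ℝ) : |dslope f a b| ≤ L := by
  rcases eq_or_ne b a with rfl | hba
  · rw [dslope_same]; exact hL b
  · rw [dslope_of_ne _ hba, slope_def_field, abs_div,
      div_le_iff₀ (abs_pos.2 (sub_ne_zero.2 hba))]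
    exact convex_univ.norm_image_sub_le_of_norm_deriv_le (fun x _ => hf x) (fun x _ => hL x)
      trivial trivial

theorem measurable_dslope_comp {f : ℝ → ℝ → ℝ} {g h : ℝ → ℝ} (hf : Continuous (uncurry f))
    (hg : Continuous g) (hh : Continuous h) : Measurable fun s => dslope (f s) (g s) (h s) := by
  classical
  have hdslope : (fun s => dslope (f s) (g s) (h s)) = fun s => if h s = g s
      then deriv (f s) (g s) else (h s - g s)⁻¹ * (f s (h s) - f s (g s)) := by
    funext s
    split_ifs with hs
    · rw [hs, dslope_same]
    · rw [dslope_of_ne _ hs, slope_def_field, div_eq_inv_mul]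
  rw [hdslope]
  refine Measurable.ite (measurableSet_eq_fun hh.measurable hg.measurable)
    ((measurable_deriv_with_param hf).comp (measurable_id.prodMk hg.measurable)) ?_
  exact (hh.sub hg).measurable.inv.mul
    ((hf.comp (continuous_id.prodMk hh)).sub (hf.comp (continuous_id.prodMk hg))).measurable

theorem hasDerivAt_comp_curve {y : ℝ → ℝ → ℝ} {γ : ℝ → ℝ} {v s : ℝ}
    (hy : DifferentiableAt ℝ (uncurry y) (s, γ s)) (hγ : HasDerivAt γ v s) :
    HasDerivAt (fun τ => y τ (γ τ))
      (deriv (fun τ => y τ (γ s)) s + v * deriv (y s) (γ s)) s := by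
  set D := fderiv ℝ (uncurry y) (s, γ s)
  have hD : HasFDerivAt (uncurry y) D (s, γ s) := hy.hasFDerivAt
  have htime : HasDerivAt (fun τ => y τ (γ s)) (D (1, 0)) s :=
    hD.comp_hasDerivAt (f := fun τ => (τ, γ s)) s
      ((hasDerivAt_id s).prodMk (hasDerivAt_const s (γ s)))
  have hspace : HasDerivAt (y s) (D (0, 1)) (γ s) :=
    hD.comp_hasDerivAt (f := fun w => (s, w)) (γ s)
      ((hasDerivAt_const (γ s) s).prodMk (hasDerivAt_id (γ s)))
  have hsplit : D (1, v) = D (1, 0) + v * D (0, 1) := by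
    rw [← smul_eq_mul, ← D.map_smul, ← map_add]; simp
  rw [htime.deriv, hspace.deriv, ← hsplit]
  exact hD.comp_hasDerivAt (f := fun τ => (τ, γ τ)) s ((hasDerivAt_id s).prodMk hγ)

structure IsFlow (u q : ℝ → ℝ → ℝ) : Prop where
  zero : ∀ x, q 0 x = x
  hasDerivAt : ∀ t x, HasDerivAt (fun τ => q τ x) (u t (q t x)) t

namespace IsFlow

variable {u q : ℝ → ℝ → ℝ} {L t : ℝ}

theorem continuous_time (hq : IsFlow u q) (x : ℝ) : Continuous fun s => q s x :=
  continuous_iff_continuousAt.2 fun s => (hq.hasDerivAt s x).continuousAt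

theorem hasDerivAt_sub (hq : IsFlow u q) (x x' s : ℝ) :
    HasDerivAt (fun τ => q τ x' - q τ x)
      (dslope (u s) (q s x) (q s x') * (q s x' - q s x)) s := by
  rw [mul_comm, ← smul_eq_mul, sub_smul_dslope]
  exact (hq.hasDerivAt s x').sub (hq.hasDerivAt s x)

theorem sub_eq_mul_exp (hq : IsFlow u q) (hu : Continuous (uncurry u))
    (hu_diff : ∀ t, Differentiable ℝ (u t)) (hu_lip : ∀ t x, |deriv (u t) x| ≤ L)
    (ht : 0 ≤ t) (x x' : ℝ) :
    q t x' - q t x = (x' - x) * exp (∫ s in 0..t, dslope (u s) (q s x) (q s x')) := by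
  have hbound (s : ℝ) := abs_dslope_le (hu_diff s) (hu_lip s) (q s x) (q s x')
  have h := eq_mul_exp_integral_of_hasDerivAt ht (hq.hasDerivAt_sub x x') hbound
    (intervalIntegrable_of_abs_le
      (measurable_dslope_comp hu (hq.continuous_time x) (hq.continuous_time x')) hbound 0 t)
  simpa only [hq.zero] using h

theorem lipschitzWith_space (hq : IsFlow u q) (hu : Continuous (uncurry u))
    (hu_diff : ∀ t, Differentiable ℝ (u t)) (hu_lip : ∀ t x, |deriv (u t) x| ≤ L)
    (ht : 0 ≤ t) : LipschitzWith (exp (L * t)).toNNReal (q t) := by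
  refine LipschitzWith.of_dist_le' fun x' x => ?_
  rw [dist_eq, dist_eq, hq.sub_eq_mul_exp hu hu_diff hu_lip ht, abs_mul, abs_exp, mul_comm]
  gcongr
  exact (le_abs_self _).trans <| abs_integral_le_mul ht fun s =>
    abs_dslope_le (hu_diff s) (hu_lip s) (q s x) (q s x')

theorem hasDerivAt_space (hq : IsFlow u q) (hu : Continuous (uncurry u))
    (hu_diff : ∀ t, Differentiable ℝ (u t)) (hu_lip : ∀ t x, |deriv (u t) x| ≤ L)
    (ht : 0 ≤ t) (x : ℝ) :
    HasDerivAt (q t) (exp (∫ s in 0..t, deriv (u s) (q s x))) x := by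
  have hcont : ContinuousAt (fun x' => ∫ s in 0..t, dslope (u s) (q s x) (q s x')) x := by
    refine continuousAt_of_dominated_interval (bound := fun _ => L)
      (Eventually.of_forall fun x' => (measurable_dslope_comp hu (hq.continuous_time x)
        (hq.continuous_time x')).aestronglyMeasurable)
      (Eventually.of_forall fun x' => ae_of_all _ fun s _ =>
        (norm_eq_abs _).trans_le (abs_dslope_le (hu_diff s) (hu_lip s) _ _))
      intervalIntegrable_const (ae_of_all _ fun s hs => ?_)
    rw [uIoc_of_le ht] at hs
    exact (continuousAt_dslope_same.2 (hu_diff s (q s x))).comp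
      (hq.lipschitzWith_space hu hu_diff hu_lip hs.1.le).continuous.continuousAt
  have hlim : Tendsto (fun x' => ∫ s in 0..t, dslope (u s) (q s x) (q s x')) (𝓝 x)
      (𝓝 (∫ s in 0..t, deriv (u s) (q s x))) := by
    simpa only [dslope_same] using hcont.tendsto
  rw [hasDerivAt_iff_tendsto_slope]
  refine (((continuous_exp.tendsto _).comp hlim).mono_left nhdsWithin_le_nhds).congr'
    (eventually_nhdsWithin_of_forall fun x' hx' => ?_)
  rw [comp_apply, slope_def_field, hq.sub_eq_mul_exp hu hu_diff hu_lip ht,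
    mul_div_cancel_left₀ _ (sub_ne_zero.2 hx')]

theorem conservation (hq : IsFlow u q) (hu : Continuous (uncurry u))
    (hu_lip : ∀ t x, |deriv (u t) x| ≤ L) {y : ℝ → ℝ → ℝ} (hy : ContDiff ℝ 1 (uncurry y))
    (hpde : ∀ t x, deriv (fun τ => y τ x) t + u t x * deriv (y t) x
      + 2 * deriv (u t) x * y t x = 0)
    (ht : 0 ≤ t) (x : ℝ) :
    y 0 x = y t (q t x) * exp (∫ s in 0..t, deriv (u s) (q s x)) ^ 2 := by
  set b := fun s => deriv (u s) (q s x)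
  have hk (s : ℝ) : HasDerivAt (fun τ => y τ (q τ x)) (-2 * b s * y s (q s x)) s := by
    convert hasDerivAt_comp_curve ((hy.differentiable one_ne_zero) _) (hq.hasDerivAt s x)
      using 1
    linarith [hpde s (q s x)]
  have hb_meas : Measurable b := (measurable_deriv_with_param hu).comp
    (measurable_id.prodMk (hq.continuous_time x).measurable)
  have hbound (s : ℝ) : |-2 * b s| ≤ 2 * L := by
    rw [abs_mul, abs_neg, abs_two]
    exact mul_le_mul_of_nonneg_left (hu_lip s _) zero_le_two
  have h := eq_mul_exp_integral_of_hasDerivAt (a := fun s => -2 * b s) ht hk hbound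
    (intervalIntegrable_of_abs_le (hb_meas.const_mul _) hbound 0 t)
  rw [intervalIntegral.integral_const_mul, hq.zero] at h
  rw [h, mul_assoc, ← exp_nat_mul, ← exp_add]
  norm_num

end IsFlow

theorem stmt19_general (T L : ℝ) (u : ℝ → ℝ → ℝ)
    (hu_cont : Continuous (Function.uncurry u))
    (hu_diff : ∀ t, Differentiable ℝ (u t))
    (hu_lip : ∀ t x, |deriv (u t) x| ≤ L)
    (q : ℝ → ℝ → ℝ)
    (hq0 : ∀ x, q 0 x = x)
    (hq : ∀ t x, HasDerivAt (fun τ => q τ x) (u t (q t x)) t) :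
    ∀ t ∈ Set.Icc 0 T, ∀ x : ℝ,
      -- formula for the spatial derivative of the flow
      HasDerivAt (fun ξ => q t ξ)
        (Real.exp (∫ s in (0:ℝ)..t, deriv (u s) (q s x))) x ∧
      -- two-sided exponential bounds
      Real.exp (-L * t) ≤ Real.exp (∫ s in (0:ℝ)..t, deriv (u s) (q s x)) ∧
      Real.exp (∫ s in (0:ℝ)..t, deriv (u s) (q s x)) ≤ Real.exp (L * t) ∧
      -- conservation of `y q_x²` along the flow
      (∀ y : ℝ → ℝ → ℝ,
        (∀ t' x', y t' x' = u t' x' - deriv (deriv (u t')) x') →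
        ContDiff ℝ 1 (Function.uncurry y) →
        (∀ t' x', deriv (fun τ => y τ x') t' + u t' x' * deriv (y t') x'
            + 2 * deriv (u t') x' * y t' x' = 0) →
        y 0 x = y t (q t x) *
          (Real.exp (∫ s in (0:ℝ)..t, deriv (u s) (q s x)))^2) := by
  intro t ht x
  have hflow : IsFlow u q := ⟨hq0, hq⟩
  have hbound : |∫ s in 0..t, deriv (u s) (q s x)| ≤ L * t :=
    abs_integral_le_mul ht.1 fun s => hu_lip s _
  refine ⟨hflow.hasDerivAt_space hu_cont hu_diff hu_lip ht.1 x, ?_, ?_,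
    fun y _ hy hpde => hflow.conservation hu_cont hu_lip hy hpde ht.1 x⟩
  · exact exp_le_exp.2 (by linarith [(abs_le.1 hbound).1])
  · exact exp_le_exp.2 (abs_le.1 hbound).2

/-- Properties of the flow `q` of a time-dependent vector field `u` with
`|u_x| ≤ L`: the spatial derivative of the flow is
`q_x(t,x) = exp(∫₀ᵗ u_x(s,q(s,x)) ds)`, hence `e^{-Lt} ≤ q_x ≤ e^{Lt}`;
moreover, if `y = u - u_xx` is `C¹` and satisfies the transport equation
`y_t + u y_x + 2 u_x y = 0` (i.e. `u` solves Camassa–Holm), then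
`y(0,x) = y(t,q(t,x)) q_x(t,x)²`. -/
theorem stmt19 (T L : ℝ) (hT : 0 < T) (hL : 0 ≤ L) (u : ℝ → ℝ → ℝ)
    (hu_cont : Continuous (Function.uncurry u))
    (hu_diff : ∀ t, Differentiable ℝ (u t))
    (hu_lip : ∀ t x, |deriv (u t) x| ≤ L)
    (q : ℝ → ℝ → ℝ)
    (hq0 : ∀ x, q 0 x = x)
    (hq : ∀ t x, HasDerivAt (fun τ => q τ x) (u t (q t x)) t) :
    ∀ t ∈ Set.Icc 0 T, ∀ x : ℝ,
      -- formula for the spatial derivative of the flow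
      HasDerivAt (fun ξ => q t ξ)
        (Real.exp (∫ s in (0:ℝ)..t, deriv (u s) (q s x))) x ∧
      -- two-sided exponential bounds
      Real.exp (-L * t) ≤ Real.exp (∫ s in (0:ℝ)..t, deriv (u s) (q s x)) ∧
      Real.exp (∫ s in (0:ℝ)..t, deriv (u s) (q s x)) ≤ Real.exp (L * t) ∧
      -- conservation of `y q_x²` along the flow
      (∀ y : ℝ → ℝ → ℝ,
        (∀ t' x', y t' x' = u t' x' - deriv (deriv (u t')) x') →
        ContDiff ℝ 1 (Function.uncurry y) →
        (∀ t' x', deriv (fun τ => y τ x') t' + u t' x' * deriv (y t') x'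
            + 2 * deriv (u t') x' * y t' x' = 0) →
        y 0 x = y t (q t x) *
          (Real.exp (∫ s in (0:ℝ)..t, deriv (u s) (q s x)))^2) :=
  stmt19_general T L u hu_cont hu_diff hu_lip q hq0 hq
end
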